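/- arXiv:1710.11253 — 3 statements merged into one kernel-verified Lean document; each statement's English description precedes it below -/
import Mathlib

section
/- Let A be an m×n real matrix and k ≤ n. There exists a subset J ⊆ [n] of size k and a matrix Z ∈ ℝ^{k×n} such that the number of entries where A differs from A_{:,J}·Z is at most (k+1) times the minimum over all rank-k matrices B of the number of entries where A and B differ. -/
open scoped Classical

/-- `l0 A` is the number of nonzero entries of the matrix `A`. -/
noncomputable def l0 {m n : ℕ} (A : Matrix (Fin m) (Fin n) ℝ) : ℕ :=
  (Finset.univ.filter fun p : Fin m × Fin n => A p.1 p.2 ≠ 0).card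

/-!
Fix a rank-`k` matrix `B` minimising `‖A - B‖₀` and write `E = A - B`. Among the `k`-tuples of
columns of `B` that span its column space, pick one, `J`, minimising the total number of nonzeros
of the corresponding columns of `E`. By the exchange argument, every column `B_j` is a combination
`∑ Z t j • B_{J t}` that only uses columns with `‖E_{J t}‖₀ ≤ ‖E_j‖₀`. Since `B = B_J Z`, we get
`A - A_J Z = E - E_J Z`, whose `j`-th column is supported in the union of the support of `E_j` and
of at most `k` supports of size at most `‖E_j‖₀`; summing over `j` gives the factor `k + 1`.
-/

open Finset Module Submodule

section CheapSpanningColumns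

variable {K V ι κ : Type*} [Field K] [AddCommGroup V] [Module K V]

theorem span_range_le_span_range_update [Fintype κ] [DecidableEq κ] {w : κ → V} {z : κ → K}
    {x : V} (hx : ∑ u, z u • w u = x) {t : κ} (ht : z t ≠ 0) :
    span K (Set.range w) ≤ span K (Set.range (Function.update w t x)) := by
  set w' := Function.update w t x
  have hw' : ∀ u, u ≠ t → w u ∈ span K (Set.range w') := fun u hu =>
    Function.update_of_ne hu x w ▸ subset_span ⟨u, rfl⟩
  rw [span_le]
  rintro _ ⟨u, rfl⟩
  rcases eq_or_ne u t with rfl | hu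
  · have hsplit : z u • w u = x - ∑ v ∈ univ.erase u, z v • w v := by
      rw [← hx, ← add_sum_erase _ _ (mem_univ u), add_sub_cancel_right]
    rw [SetLike.mem_coe, ← smul_mem_iff _ ht, hsplit]
    refine sub_mem (Function.update_self u x w ▸ subset_span ⟨u, rfl⟩) (sum_mem fun v hv => ?_)
    exact smul_mem _ _ (hw' v (ne_of_mem_erase hv))
  · exact hw' u hu

theorem exists_fin_span_range_comp_eq [Finite ι] {r : ℕ} (v : ι → V)
    (hr : finrank K (span K (Set.range v)) = r) :
    ∃ b : Fin r → ι, span K (Set.range (v ∘ b)) = span K (Set.range v) := by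
  obtain ⟨κ, a, ha, hspan, hli⟩ := exists_linearIndependent' K v
  have : Finite κ := Finite.of_injective a ha
  have : Fintype κ := Fintype.ofFinite κ
  let e : κ ≃ Fin r := Fintype.equivFinOfCardEq (by rw [← hr, ← hspan, finrank_span_eq_card hli])
  refine ⟨a ∘ e.symm, ?_⟩
  rw [← Function.comp_assoc, EquivLike.range_comp, hspan]

theorem exists_sum_smul_eq_of_cost_le [Finite ι] {r : ℕ} (v : ι → V)
    (hr : finrank K (span K (Set.range v)) = r) (c : ι → ℕ) :
    ∃ b : Fin r → ι, Function.Injective b ∧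
      ∀ j, ∃ z : Fin r → K, ∑ t, z t • v (b t) = v j ∧ ∀ t, z t ≠ 0 → c (b t) ≤ c j := by
  let S : Set (Fin r → ι) := {b | span K (Set.range (v ∘ b)) = span K (Set.range v)}
  obtain ⟨b, hbS, hmin⟩ := (measure fun b : Fin r → ι => ∑ t, c (b t)).wf.has_min S
    (exists_fin_span_range_comp_eq v hr)
  have hb : span K (Set.range (v ∘ b)) = span K (Set.range v) := hbS
  have hli : LinearIndependent K (v ∘ b) := by
    rw [linearIndependent_iff_card_eq_finrank_span, Set.finrank, hb, hr, Fintype.card_fin]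
  refine ⟨b, hli.injective.of_comp, fun j => ?_⟩
  obtain ⟨z, hz⟩ := (mem_span_range_iff_exists_fun K).mp
    (hb ▸ subset_span ⟨j, rfl⟩ : v j ∈ span K (Set.range (v ∘ b)))
  refine ⟨z, hz, fun t hzt => not_lt.mp fun hlt => hmin (Function.update b t j) ?_ ?_⟩
  · -- exchanging `b t` for the cheaper `j` keeps the span
    refine le_antisymm (span_mono (Set.range_comp_subset_range _ v)) ?_
    rw [← hb, Function.comp_update]
    exact span_range_le_span_range_update hz hzt
  · show ∑ u, c (Function.update b t j u) < ∑ u, c (b u)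
    rw [← add_sum_erase _ _ (mem_univ t), ← add_sum_erase _ _ (mem_univ t),
      Function.update_self]
    refine add_lt_add_of_lt_of_le hlt (sum_le_sum fun u hu => ?_)
    rw [Function.update_of_ne (ne_of_mem_erase hu)]

end CheapSpanningColumns

namespace Matrix

section ColSupport

variable {m n k R : Type*} [Fintype m] [Fintype k]

noncomputable def colSupport [Zero R] (A : Matrix m n R) (j : n) : Finset m :=
  univ.filter fun i => A i j ≠ 0

theorem colSupport_sub_mul_subset [Ring R] (E : Matrix m n R) (J : k → n) (Z : Matrix k n R)
    (j : n) : colSupport (E - E.submatrix id J * Z) j ⊆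
      colSupport E j ∪ (univ.filter fun t => Z t j ≠ 0).biUnion fun t => colSupport E (J t) := by
  intro i hi
  simp only [colSupport, mem_filter, mem_univ, true_and, mem_union, mem_biUnion] at hi ⊢
  by_contra! h
  apply hi
  rw [sub_apply, h.1, zero_sub, neg_eq_zero, mul_apply]
  refine sum_eq_zero fun t _ => ?_
  by_cases hzt : Z t j = 0
  · rw [hzt, mul_zero]
  · rw [submatrix_apply, id, h.2 t hzt, zero_mul]

theorem card_colSupport_sub_mul_le [Ring R] (E : Matrix m n R) (J : k → n) (Z : Matrix k n R)
    (j : n) (hZ : ∀ t, Z t j ≠ 0 → #(colSupport E (J t)) ≤ #(colSupport E j)) :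
    #(colSupport (E - E.submatrix id J * Z) j) ≤ (Fintype.card k + 1) * #(colSupport E j) :=
  calc #(colSupport (E - E.submatrix id J * Z) j)
      ≤ #(colSupport E j) + ∑ t ∈ univ.filter fun t => Z t j ≠ 0, #(colSupport E (J t)) :=
        (card_le_card (colSupport_sub_mul_subset E J Z j)).trans
          ((card_union_le _ _).trans (Nat.add_le_add_left card_biUnion_le _))
    _ ≤ #(colSupport E j) + ∑ _t : k, #(colSupport E j) :=
        Nat.add_le_add_left ((sum_le_sum fun t ht => hZ t (mem_filter.mp ht).2).trans
          (sum_le_sum_of_subset (filter_subset _ _))) _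
    _ = (Fintype.card k + 1) * #(colSupport E j) := by
        rw [sum_const, card_univ, smul_eq_mul]; ring

end ColSupport

theorem l0_eq_sum_card_colSupport {m n : ℕ} (A : Matrix (Fin m) (Fin n) ℝ) :
    l0 A = ∑ j, #(colSupport A j) := by
  simp only [l0, colSupport, card_filter, Fintype.sum_prod_type]
  exact sum_comm

theorem sub_submatrix_mul_eq_of_submatrix_mul_eq {m n k R : Type*} [Fintype k] [Ring R]
    (A B : Matrix m n R) (J : k → n) (Z : Matrix k n R) (hB : B.submatrix id J * Z = B) :
    A - A.submatrix id J * Z = (A - B) - (A - B).submatrix id J * Z := by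
  have hsub : (A - B).submatrix id J = A.submatrix id J - B.submatrix id J := rfl
  rw [hsub, Matrix.sub_mul, hB]
  abel

end Matrix

open Matrix in
theorem exists_cols_l0_sub_le {m n : ℕ} (A B : Matrix (Fin m) (Fin n) ℝ) :
    ∃ J : Fin B.rank → Fin n, Function.Injective J ∧
      ∃ Z : Matrix (Fin B.rank) (Fin n) ℝ,
        l0 (A - A.submatrix id J * Z) ≤ (B.rank + 1) * l0 (A - B) := by
  obtain ⟨J, hJ, hrepr⟩ := exists_sum_smul_eq_of_cost_le B.col
    (rank_eq_finrank_span_cols B).symm fun j => #(colSupport (A - B) j)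
  choose z hz hcost using hrepr
  let Z : Matrix (Fin B.rank) (Fin n) ℝ := of fun t j => z j t
  have hBZ : B.submatrix id J * Z = B := by
    ext i j
    simpa [mul_apply, Z, mul_comm] using congrFun (hz j) i
  refine ⟨J, hJ, Z, ?_⟩
  rw [sub_submatrix_mul_eq_of_submatrix_mul_eq A B J Z hBZ, l0_eq_sum_card_colSupport,
    l0_eq_sum_card_colSupport, mul_sum]
  refine sum_le_sum fun j _ => ?_
  simpa using card_colSupport_sub_mul_le (A - B) J Z j (hcost j)

/-- there exist `k` columns of `A` and a matrix `Z` giving a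
`(k+1)`-approximation to the best rank-`k` approximation of `A` in ℓ₀. -/
theorem stmt_0 (m n k : ℕ) (hk : k ≤ n) (A : Matrix (Fin m) (Fin n) ℝ) :
    ∃ J : Fin k → Fin n, Function.Injective J ∧
      ∃ Z : Matrix (Fin k) (Fin n) ℝ,
        ∀ B : Matrix (Fin m) (Fin n) ℝ, B.rank = k →
          l0 (A - A.submatrix id J * Z) ≤ (k + 1) * l0 (A - B) := by
  by_cases hex : ∃ B : Matrix (Fin m) (Fin n) ℝ, B.rank = k
  · obtain ⟨B, hB, hmin⟩ :=
      (measure fun B => l0 (A - B)).wf.has_min {B | B.rank = k} (Set.nonempty_def.mpr hex)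
    subst hB
    obtain ⟨J, hJ, Z, hZ⟩ := exists_cols_l0_sub_le A B
    exact ⟨J, hJ, Z, fun B' hB' => hZ.trans (Nat.mul_le_mul_left _ (not_lt.mp (hmin B' hB')))⟩
  · exact ⟨Fin.castLE hk, Fin.castLE_injective hk, 0, fun B hB => absurd ⟨B, hB⟩ hex⟩
end

section
/- Let A = I + J ∈ ℝ^{n×n} where I is the identity and J is the all-ones matrix. Then for every column index j, min over z ∈ ℝ^n of ‖A − A_{:,j}·zᵀ‖₀ ≥ 2(1 − 1/n)·OPT^(1), where OPT^(1) = min over u,v of ‖A − u·vᵀ‖₀. -/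
/-
Taking u = v = 𝟙 leaves A - uvᵀ = I, so OPT⁽¹⁾ ≤ n. Conversely, for n ≥ 3 every column k ≠ j of
A - A_{:,j} zᵀ has entries 2 - z_k (row k), 1 - 2 z_k (row j) and 1 - z_k (all other rows); at most
one of these three values vanishes, so the column has at least two nonzero entries and the error is
at least 2(n - 1) = 2(1 - 1/n) n. For n ≤ 2 the factor 2(1 - 1/n) is at most 1 and the claim is
just OPT⁽¹⁾ ≤ ‖A - A_{:,j} zᵀ‖₀.
-/

open scoped Classical

open Finset Matrix

lemma l0_eq_sum_card_col {m n : ℕ} (M : Matrix (Fin m) (Fin n) ℝ) :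
    l0 M = ∑ k, #{i | M i k ≠ 0} := by
  simp only [l0, card_filter, Fintype.sum_prod_type]
  exact sum_comm

lemma l0_one (n : ℕ) : l0 (1 : Matrix (Fin n) (Fin n) ℝ) = n := by
  have : ({p | (1 : Matrix (Fin n) (Fin n) ℝ) p.1 p.2 ≠ 0} : Finset (Fin n × Fin n)) =
      (univ : Finset (Fin n)).diag := by
    ext p
    simp [one_apply]
  rw [l0, this, diag_card, card_univ, Fintype.card_fin]

lemma two_le_card_col_ne_zero {n : ℕ} (hn : 3 ≤ n) {A : Matrix (Fin n) (Fin n) ℝ}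
    (hA : A = 1 + of fun _ _ => 1) {j k : Fin n} (hkj : k ≠ j) (c : ℝ) :
    2 ≤ #{i | A i k - A i j * c ≠ 0} := by
  subst hA
  obtain ⟨i, hij, hik⟩ := Fin.exists_ne_and_ne_of_two_lt j k hn
  refine one_lt_card.mpr ?_
  rcases eq_or_ne c 1 with rfl | hc1
  · refine ⟨k, ?_, j, ?_, hkj⟩ <;> simp [one_apply, hkj, hkj.symm]
  rcases eq_or_ne c 2 with rfl | hc2
  · refine ⟨i, ?_, j, ?_, hij⟩ <;> simp [one_apply, hij, hik, hkj.symm] <;> norm_num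
  · refine ⟨i, ?_, k, ?_, hik⟩ <;> simp [one_apply, hij, hik, hkj] <;> intro h
    · exact hc1 (by linarith)
    · exact hc2 (by linarith)

lemma two_mul_sub_one_le_l0_sub_col {n : ℕ} (hn : 3 ≤ n) {A : Matrix (Fin n) (Fin n) ℝ}
    (hA : A = 1 + of fun _ _ => 1) (j : Fin n) (z : Fin n → ℝ) :
    2 * (n - 1) ≤ l0 (A - vecMulVec (fun i => A i j) z) := by
  rw [l0_eq_sum_card_col]
  calc 2 * (n - 1) = ∑ _k ∈ univ.erase j, 2 := by simp [card_erase_of_mem, mul_comm]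
    _ ≤ ∑ k ∈ univ.erase j, #{i | A i k - A i j * z k ≠ 0} :=
      sum_le_sum fun k hk => two_le_card_col_ne_zero hn hA (ne_of_mem_erase hk) (z k)
    _ ≤ _ := sum_le_sum_of_subset (subset_univ _)

lemma sInf_l0_sub_vecMulVec_le {n : ℕ} {A : Matrix (Fin n) (Fin n) ℝ}
    (hA : A = 1 + of fun _ _ => 1) :
    sInf {t : ℕ | ∃ u v : Fin n → ℝ, t = l0 (A - vecMulVec u v)} ≤ n := by
  refine Nat.sInf_le ⟨fun _ => 1, fun _ => 1, ?_⟩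
  have : A - vecMulVec (fun _ => 1) (fun _ => 1) = 1 := by
    ext
    simp [hA, vecMulVec_apply]
  rw [this, l0_one]

theorem stmt_1_general (n : ℕ) (A : Matrix (Fin n) (Fin n) ℝ)
    (hA : A = 1 + Matrix.of fun _ _ => (1 : ℝ)) (j : Fin n) (z : Fin n → ℝ) :
    2 * (1 - 1 / (n : ℝ)) *
        ((sInf {t : ℕ | ∃ u v : Fin n → ℝ, t = l0 (A - Matrix.vecMulVec u v)} : ℕ) : ℝ)
      ≤ (l0 (A - Matrix.vecMulVec (fun i => A i j) z) : ℝ) := by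
  rcases lt_or_ge n 3 with hn3 | hn3
  · have hfactor : 2 * (1 - 1 / (n : ℝ)) ≤ 1 := by
      have := j.pos
      interval_cases n <;> norm_num
    exact (mul_le_of_le_one_left (Nat.cast_nonneg _) hfactor).trans
      (Nat.cast_le.mpr (Nat.sInf_le ⟨_, z, rfl⟩))
  · have hfactor : 0 ≤ 2 * (1 - 1 / (n : ℝ)) := by
      have := div_le_one_of_le₀ (by exact_mod_cast j.pos : (1 : ℝ) ≤ n) n.cast_nonneg
      linarith
    calc _ ≤ 2 * (1 - 1 / (n : ℝ)) * n := by gcongr; exact sInf_l0_sub_vecMulVec_le hA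
      _ = ((2 * (n - 1) : ℕ) : ℝ) := by
        push_cast [Nat.cast_sub (by omega : 1 ≤ n)]
        field_simp
      _ ≤ _ := by exact_mod_cast two_mul_sub_one_le_l0_sub_col hn3 hA j z

/-- for `A = I + J`, any rank-1 approximation using a column of `A`
as left factor has cost at least `2(1 - 1/n)·OPT⁽¹⁾`. -/
theorem stmt_1 (n : ℕ) (hn : 0 < n) (A : Matrix (Fin n) (Fin n) ℝ)
    (hA : A = 1 + Matrix.of fun _ _ => (1 : ℝ)) (j : Fin n) (z : Fin n → ℝ) :
    2 * (1 - 1 / (n : ℝ)) *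
        ((sInf {t : ℕ | ∃ u v : Fin n → ℝ, t = l0 (A - Matrix.vecMulVec u v)} : ℕ) : ℝ)
      ≤ (l0 (A - Matrix.vecMulVec (fun i => A i j) z) : ℝ) :=
  stmt_1_general n A hA j z
end

section
/- Let A ∈ {0,1}^{m×n}, OPT = min over u ∈ {0,1}^m, v ∈ {0,1}^n of ‖A − u·vᵀ‖₀, and let (u,v) attain OPT with β = ‖v‖₀. Then OPT ≥ Σ_{i=1}^{m} min{ ‖A_{i,:}‖₀, |‖A_{i,:}‖₀ − β| }. -/
open scoped Classical

/-! Row `i` of `A - u vᵀ` is `A i` if `u i = 0` and `A i - v` if `u i = 1`, so its support is at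
least `‖A_{i,:}‖₀` in the first case and, by the triangle inequality for the Hamming distance through
`0`, at least `|‖A_{i,:}‖₀ - ‖v‖₀|` in the second. Summing over the rows gives the bound. -/

theorem l0_eq_sum_hammingNorm {m n : ℕ} (M : Matrix (Fin m) (Fin n) ℝ) :
    l0 M = ∑ i, hammingNorm (M i) := by
  rw [l0, Finset.card_filter, Fintype.sum_prod_type]
  simp only [hammingNorm, Finset.card_filter]

section Hamming

variable {ι : Type*} [Fintype ι]

theorem natAbs_sub_hammingNorm_le_hammingDist {β : ι → Type*} [∀ i, DecidableEq (β i)]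
    [∀ i, Zero (β i)] (x y : ∀ i, β i) :
    ((hammingNorm x : ℤ) - hammingNorm y).natAbs ≤ hammingDist x y := by
  rw [← hammingDist_zero_right x, ← hammingDist_zero_right y]
  have hx := hammingDist_triangle x y 0
  have hy := hammingDist_triangle y x 0
  rw [hammingDist_comm y x] at hy
  omega

theorem hammingNorm_sub {G : Type*} [DecidableEq G] [AddGroup G] (x y : ι → G) :
    hammingNorm (x - y) = hammingDist x y := by
  simp_rw [hammingNorm, hammingDist, Pi.sub_apply, sub_ne_zero]

theorem min_hammingNorm_natAbs_le_hammingNorm_sub_smul {R : Type*} [DecidableEq R] [Ring R]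
    (a v : ι → R) {c : R} (hc : c = 0 ∨ c = 1) :
    min (hammingNorm a) ((hammingNorm a : ℤ) - hammingNorm v).natAbs ≤ hammingNorm (a - c • v) := by
  rcases hc with rfl | rfl
  · simp only [zero_smul, sub_zero, min_le_left]
  · rw [one_smul, hammingNorm_sub]
    exact min_le_of_right_le (natAbs_sub_hammingNorm_le_hammingDist a v)

end Hamming

theorem stmt_6_general (m n : ℕ) (A : Matrix (Fin m) (Fin n) ℝ)
    (u : Fin m → ℝ) (v : Fin n → ℝ)
    (hu : ∀ i, u i = 0 ∨ u i = 1) :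
    ∑ i : Fin m,
        min (Finset.univ.filter fun j : Fin n => A i j ≠ 0).card
          ((((Finset.univ.filter fun j : Fin n => A i j ≠ 0).card : ℤ)
              - ((Finset.univ.filter fun j : Fin n => v j ≠ 0).card : ℤ)).natAbs)
      ≤ l0 (A - Matrix.vecMulVec u v) := by
  rw [l0_eq_sum_hammingNorm]
  refine Finset.sum_le_sum fun i _ => ?_
  have hrow : (A - Matrix.vecMulVec u v) i = A i - u i • v := rfl
  exact hrow ▸ min_hammingNorm_natAbs_le_hammingNorm_sub_smul (A i) v (hu i)

/-- `OPT ≥ Σ_i min{‖A_{i,:}‖₀, |‖A_{i,:}‖₀ - β|}` for an optimal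
binary rank-1 solution `(u,v)` with `β = ‖v‖₀`. -/
theorem stmt_6 (m n : ℕ) (A : Matrix (Fin m) (Fin n) ℝ)
    (hA : ∀ i j, A i j = 0 ∨ A i j = 1)
    (u : Fin m → ℝ) (v : Fin n → ℝ)
    (hu : ∀ i, u i = 0 ∨ u i = 1) (hv : ∀ j, v j = 0 ∨ v j = 1)
    (hopt : ∀ u' : Fin m → ℝ, ∀ v' : Fin n → ℝ,
      (∀ i, u' i = 0 ∨ u' i = 1) → (∀ j, v' j = 0 ∨ v' j = 1) →
      l0 (A - Matrix.vecMulVec u v) ≤ l0 (A - Matrix.vecMulVec u' v')) :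
    ∑ i : Fin m,
        min (Finset.univ.filter fun j : Fin n => A i j ≠ 0).card
          ((((Finset.univ.filter fun j : Fin n => A i j ≠ 0).card : ℤ)
              - ((Finset.univ.filter fun j : Fin n => v j ≠ 0).card : ℤ)).natAbs)
      ≤ l0 (A - Matrix.vecMulVec u v) :=
  stmt_6_general m n A u v hu
end
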